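/- arXiv:2101.08544 — 3 statements merged into one kernel-verified Lean document; each statement's English description precedes it below -/
import Mathlib

section
/- Let χ be a kernel, f: ℝ⁺ → ℝ bounded, t ∈ ℝ⁺ a point where the one-sided limits f(t±0) exist, and h_t defined by h_t(x) = f(x) - f(t-0) for x < t, h_t(x) = f(x) - f(t+0) for x > t, h_t(t) = 0. If w·log(t) ∉ ℤ, then (S_w^χ f)(t) = (S_w^χ h_t)(t) + f(t-0) + ψ_χ⁻(t^w)·[f(t+0) - f(t-0)]. -/
open Real Filter Set MeasureTheory

noncomputable def expSamp (χ f : ℝ → ℝ) (w t : ℝ) : ℝ :=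
  ∑' k : ℤ, χ (Real.exp (-(k : ℝ)) * t ^ w) * f (Real.exp ((k : ℝ) / w))

noncomputable def psiMinus (χ : ℝ → ℝ) (u : ℝ) : ℝ :=
  ∑' k : ℤ, if Real.log u < (k : ℝ) then χ (u * Real.exp (-(k : ℝ))) else 0

noncomputable def psiPlus (χ : ℝ → ℝ) (u : ℝ) : ℝ :=
  ∑' k : ℤ, if (k : ℝ) < Real.log u then χ (u * Real.exp (-(k : ℝ))) else 0

/-- χ is a kernel: absolute summability, partition of unity, and a finite absolute
moment of some order ν > 0. -/
def IsKernel (χ : ℝ → ℝ) : Prop :=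
  (∀ u : ℝ, 0 < u → Summable fun k : ℤ => |χ (Real.exp (-(k : ℝ)) * u)|) ∧
  (∀ u : ℝ, 0 < u → HasSum (fun k : ℤ => χ (Real.exp (-(k : ℝ)) * u)) 1) ∧
  ∃ ν : ℝ, 0 < ν ∧ ∃ C : ℝ, ∀ u : ℝ, 0 < u →
    (Summable fun k : ℤ => |χ (Real.exp (-(k : ℝ)) * u)| * |(k : ℝ) - Real.log u| ^ ν) ∧
    ∑' k : ℤ, |χ (Real.exp (-(k : ℝ)) * u)| * |(k : ℝ) - Real.log u| ^ ν ≤ C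

/-- Logarithmic modulus of continuity. -/
noncomputable def logMod (f : ℝ → ℝ) (δ : ℝ) : ℝ :=
  sSup {d : ℝ | ∃ p q : ℝ, 0 < p ∧ 0 < q ∧ |Real.log p - Real.log q| ≤ δ ∧ d = |f p - f q|}

/-- Sup norm of a function on the positive reals. -/
noncomputable def supNormPos (f : ℝ → ℝ) : ℝ := ⨆ x : {x : ℝ // 0 < x}, |f x.1|

/-- Absolute moment of order ν of the kernel χ. -/
noncomputable def absMoment (χ : ℝ → ℝ) (ν : ℝ) : ℝ :=
  ⨆ u : {u : ℝ // 0 < u},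
    ∑' k : ℤ, |χ (Real.exp (-(k : ℝ)) * u.1)| * |(k : ℝ) - Real.log u.1| ^ ν

/-- log-uniform continuity on ℝ⁺. -/
def LogUniformCont (f : ℝ → ℝ) : Prop :=
  ∀ ε : ℝ, 0 < ε → ∃ δ : ℝ, 0 < δ ∧ ∀ p q : ℝ, 0 < p → 0 < q →
    |Real.log p - Real.log q| < δ → |f p - f q| < ε

/-- The second order Mellin B-spline. -/
noncomputable def mellinB2 (t : ℝ) : ℝ :=
  if 1 ≤ t ∧ t ≤ Real.exp 1 then 1 - Real.log t
  else if Real.exp (-1) ≤ t ∧ t < 1 then 1 + Real.log t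
  else 0

/-! Since w·log t ∉ ℤ, no sample node e^{k/w} equals t, so at every node
f = h_t + f(t-0) + [f(t+0) - f(t-0)]·1_{t < e^{k/w}}, and t < e^{k/w} iff log(t^w) < k.
Summing against the kernel, the constant term is reproduced by the partition of unity and the
jump term yields ψ_χ⁻(t^w); all three series converge absolutely because χ is absolutely
summable along the nodes and h_t is bounded. -/

noncomputable def jumpRemainder (f : ℝ → ℝ) (t fm fp : ℝ) : ℝ → ℝ :=
  fun x => if x < t then f x - fm else if t < x then f x - fp else 0

lemma eq_jumpRemainder_add {f : ℝ → ℝ} {t x : ℝ} (fm fp : ℝ) (hx : x ≠ t) :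
    f x = jumpRemainder f t fm fp x + fm + if t < x then fp - fm else 0 := by
  rcases hx.lt_or_gt with hlt | hgt
  · simp [jumpRemainder, hlt, hlt.not_gt]
  · simp [jumpRemainder, hgt, hgt.not_gt]

lemma abs_jumpRemainder_le {f : ℝ → ℝ} {B : ℝ} (hf : ∀ x : ℝ, 0 < x → |f x| ≤ B)
    (t fm fp : ℝ) {x : ℝ} (hx : 0 < x) :
    |jumpRemainder f t fm fp x| ≤ B + |fm| + |fp| := by
  have hfx := hf x hx
  have hfm := abs_nonneg fm
  have hfp := abs_nonneg fp
  unfold jumpRemainder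
  split_ifs
  · linarith [abs_sub (f x) fm]
  · linarith [abs_sub (f x) fp]
  · rw [abs_zero]
    linarith [abs_nonneg (f x)]

lemma summable_mul_of_summable_abs_of_abs_le {ι : Type*} {g φ : ι → ℝ} {C : ℝ}
    (hg : Summable fun i => |g i|) (hφ : ∀ i, |φ i| ≤ C) :
    Summable fun i => g i * φ i :=
  (hg.mul_right C).of_norm_bounded fun i => by
    rw [Real.norm_eq_abs, abs_mul]
    exact mul_le_mul_of_nonneg_left (hφ i) (abs_nonneg _)

lemma lt_exp_div_iff_log_rpow_lt {t w : ℝ} (ht : 0 < t) (hw : 0 < w) (s : ℝ) :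
    t < exp (s / w) ↔ log (t ^ w) < s := by
  rw [← log_lt_iff_lt_exp ht, log_rpow ht, lt_div_iff₀ hw, mul_comm]

lemma exp_div_ne {t w s : ℝ} (hw : w ≠ 0) (hs : w * log t ≠ s) : exp (s / w) ≠ t := by
  rintro rfl
  rw [log_exp, mul_div_cancel₀ s hw] at hs
  exact hs rfl

lemma hasSum_psiMinus {χ : ℝ → ℝ} {u : ℝ}
    (hχ : Summable fun k : ℤ => |χ (exp (-(k : ℝ)) * u)|) :
    HasSum (fun k : ℤ => if log u < (k : ℝ) then χ (exp (-(k : ℝ)) * u) else 0)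
      (psiMinus χ u) := by
  have hs : Summable fun k : ℤ => if log u < (k : ℝ) then χ (exp (-(k : ℝ)) * u) else 0 :=
    hχ.of_norm_bounded fun k => by
      rw [Real.norm_eq_abs]
      split_ifs
      · exact le_rfl
      · simp
  simpa only [psiMinus, mul_comm u] using hs.hasSum

theorem stmt1_general (χ f : ℝ → ℝ) (hχ : IsKernel χ)
    (B : ℝ) (hf : ∀ x : ℝ, 0 < x → |f x| ≤ B)
    (t : ℝ) (ht : 0 < t) (fp fm : ℝ)
    (w : ℝ) (hw : 0 < w) (hwt : ∀ m : ℤ, w * Real.log t ≠ (m : ℝ)) :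
    expSamp χ f w t =
      expSamp χ (fun x => if x < t then f x - fm else if t < x then f x - fp else 0) w t
        + fm + psiMinus χ (t ^ w) * (fp - fm) := by
  obtain ⟨hχabs, hχone, -⟩ := hχ
  have hu : 0 < t ^ w := rpow_pos_of_pos ht w
  set g : ℤ → ℝ := fun k => χ (exp (-(k : ℝ)) * t ^ w)
  have hdecomp (k : ℤ) : f (exp (k / w)) = jumpRemainder f t fm fp (exp (k / w)) + fm +
      if log (t ^ w) < k then fp - fm else 0 := by
    simp only [← lt_exp_div_iff_log_rpow_lt ht hw]
    exact eq_jumpRemainder_add fm fp (exp_div_ne hw.ne' (hwt k))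
  have hrem : HasSum (fun k : ℤ => g k * jumpRemainder f t fm fp (exp (k / w)))
      (expSamp χ (jumpRemainder f t fm fp) w t) :=
    (summable_mul_of_summable_abs_of_abs_le (hχabs _ hu)
      fun k => abs_jumpRemainder_le hf t fm fp (exp_pos _)).hasSum
  have hconst : HasSum (fun k : ℤ => g k * fm) fm := by
    simpa only [one_mul] using (hχone _ hu).mul_right fm
  have hjump : HasSum (fun k : ℤ => g k * if log (t ^ w) < k then fp - fm else 0)
      (psiMinus χ (t ^ w) * (fp - fm)) := by
    have hswap (k : ℤ) : (g k * if log (t ^ w) < k then fp - fm else 0) =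
        (if log (t ^ w) < k then χ (exp (-(k : ℝ)) * t ^ w) else 0) * (fp - fm) := by
      split_ifs <;> simp [g, mul_comm]
    simpa only [hswap] using (hasSum_psiMinus (hχabs _ hu)).mul_right (fp - fm)
  change _ = expSamp χ (jumpRemainder f t fm fp) w t + fm + psiMinus χ (t ^ w) * (fp - fm)
  rw [← ((hrem.add hconst).add hjump).tsum_eq]
  exact tsum_congr fun k => by rw [hdecomp k]; ring

/-- Representation lemma, case w·log t ∉ ℤ. -/
theorem stmt1 (χ f : ℝ → ℝ) (hχ : IsKernel χ)
    (B : ℝ) (hf : ∀ x : ℝ, 0 < x → |f x| ≤ B)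
    (t : ℝ) (ht : 0 < t) (fp fm : ℝ)
    (hfp : Filter.Tendsto f (nhdsWithin t (Set.Ioi t)) (nhds fp))
    (hfm : Filter.Tendsto f (nhdsWithin t (Set.Iio t)) (nhds fm))
    (w : ℝ) (hw : 0 < w) (hwt : ∀ m : ℤ, w * Real.log t ≠ (m : ℝ)) :
    expSamp χ f w t =
      expSamp χ (fun x => if x < t then f x - fm else if t < x then f x - fp else 0) w t
        + fm + psiMinus χ (t ^ w) * (fp - fm) :=
  stmt1_general χ f hχ B hf t ht fp fm w hw hwt
end

section
/- Let f: ℝ⁺ → ℝ be bounded with a removable discontinuity at t ∈ ℝ⁺, i.e. f(t+0) = f(t-0) = ℓ (possibly f(t) ≠ ℓ), and let χ be a kernel. Then: (i) lim_{w→∞, w·log t ∈ ℤ} (S_w^χ f)(t) = ℓ + χ(1)[f(t) - ℓ]; (ii) lim_{w→∞, w·log t ∉ ℤ} (S_w^χ f)(t) = ℓ; (iii) if χ(1) = 0 then lim_{w→∞} (S_w^χ f)(t) = ℓ. -/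
open Real Filter Set MeasureTheory

/-
Redefining `f` at `t` to be `ℓ` gives a bounded function `f₀` that is continuous at `t`, and
`S_w f₀ (t) → ℓ` by the usual estimate: the samples with `|k/w - log t| < η` contribute at most
`ε ∑ₖ |χ(e^{-k} t^w)|`, which is uniformly bounded thanks to the partition of unity and the
moment condition, while the remaining ones are bounded through the absolute moment of order `ν`
by `O((w η)^{-ν})`. The difference `S_w f (t) - S_w f₀ (t)` only sees a node `e^{k/w}` equal to
`t`, which exists iff `w log t ∈ ℤ`, and is then `χ(1) (f(t) - ℓ)`.
-/

lemma abs_tsum_le_tsum_abs {ι : Type*} {a : ι → ℝ} (ha : Summable fun i => |a i|) :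
    |∑' i, a i| ≤ ∑' i, |a i| :=
  norm_tsum_le_tsum_norm (f := a) ha

lemma tsum_abs_le_of_hasSum_one_of_moment {a : ℤ → ℝ} {L ν C : ℝ} (hν : 0 < ν)
    (habs : Summable fun k => |a k|) (ha : HasSum a 1)
    (hmom : Summable fun k : ℤ => |a k| * |(k : ℝ) - L| ^ ν)
    (hC : ∑' k : ℤ, |a k| * |(k : ℝ) - L| ^ ν ≤ C) :
    ∑' k, |a k| ≤ 1 + 2 * (2 ^ ν * C) := by
  set k₀ := round L
  -- only `round L` can lie within `1/2` of `L`: the moment controls every other index, and the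
  -- partition of unity then controls that one
  have hfar : ∀ k ≠ k₀, |a k| ≤ 2 ^ ν * (|a k| * |(k : ℝ) - L| ^ ν) := by
    intro k hk
    have hk₀ : (1 : ℝ) ≤ |(k : ℝ) - k₀| := by
      exact_mod_cast Int.one_le_abs (sub_ne_zero.mpr hk)
    have hhalf : 1 ≤ 2 * |(k : ℝ) - L| := by
      linarith [abs_sub_round L, abs_sub_le (k : ℝ) L k₀, abs_sub_comm L (k₀ : ℝ)]
    calc |a k| ≤ |a k| * (2 * |(k : ℝ) - L|) ^ ν :=
          le_mul_of_one_le_right (abs_nonneg _) (Real.one_le_rpow hhalf hν.le)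
      _ = 2 ^ ν * (|a k| * |(k : ℝ) - L| ^ ν) := by
          rw [Real.mul_rpow zero_le_two (abs_nonneg _)]; ring
  have habs_ite : ∀ k, |if k = k₀ then 0 else a k| = if k = k₀ then 0 else |a k| := fun k => by
    split_ifs <;> simp
  have hsumT : Summable fun k => if k = k₀ then 0 else |a k| :=
    habs.of_nonneg_of_le (fun k => by split_ifs <;> positivity) (fun k => by split_ifs <;> simp)
  set T := ∑' k, if k = k₀ then 0 else |a k|
  have hT : T ≤ 2 ^ ν * C :=
    calc T ≤ ∑' k : ℤ, 2 ^ ν * (|a k| * |(k : ℝ) - L| ^ ν) := by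
          refine Summable.tsum_le_tsum (fun k => ?_) hsumT (hmom.mul_left _)
          split_ifs with hk
          · positivity
          · exact hfar k hk
      _ ≤ 2 ^ ν * C := by rw [tsum_mul_left]; gcongr
  have hk₀ : |a k₀| ≤ 1 + T := by
    have hsplit : a k₀ = 1 - ∑' k, if k = k₀ then 0 else a k := by
      rw [← ha.tsum_eq, ha.summable.tsum_eq_add_tsum_ite k₀]
      ring
    have hrest : |∑' k, if k = k₀ then 0 else a k| ≤ T := by
      simpa only [habs_ite] using abs_tsum_le_tsum_abs (a := fun k => if k = k₀ then 0 else a k)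
        (by simpa only [habs_ite] using hsumT)
    rw [hsplit]
    exact (abs_sub _ _).trans (by rw [abs_one]; linarith)
  rw [habs.tsum_eq_add_tsum_ite k₀]
  linarith

lemma abs_tsum_mul_le_of_moment {a g : ℤ → ℝ} {L ν C M D ε R : ℝ} (hν : 0 ≤ ν) (hR : 0 < R)
    (hε : 0 ≤ ε) (habs : Summable fun k => |a k|) (hM : ∑' k, |a k| ≤ M)
    (hmom : Summable fun k : ℤ => |a k| * |(k : ℝ) - L| ^ ν)
    (hC : ∑' k : ℤ, |a k| * |(k : ℝ) - L| ^ ν ≤ C)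
    (hD : ∀ k, |g k| ≤ D) (hnear : ∀ k : ℤ, |(k : ℝ) - L| < R → |g k| ≤ ε) :
    |∑' k, a k * g k| ≤ ε * M + D / R ^ ν * C := by
  have hD₀ : 0 ≤ D := (abs_nonneg _).trans (hD 0)
  have hpt : ∀ k : ℤ, |a k * g k| ≤ ε * |a k| + D / R ^ ν * (|a k| * |(k : ℝ) - L| ^ ν) := by
    intro k
    rw [abs_mul]
    rcases lt_or_ge |(k : ℝ) - L| R with hk | hk
    · have : 0 ≤ D / R ^ ν * (|a k| * |(k : ℝ) - L| ^ ν) := by positivity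
      nlinarith [hnear k hk, abs_nonneg (a k)]
    · have hRν : 0 < R ^ ν := Real.rpow_pos_of_pos hR ν
      have hratio : 1 ≤ |(k : ℝ) - L| ^ ν / R ^ ν := by
        rw [one_le_div hRν]; exact Real.rpow_le_rpow hR.le hk hν
      calc |a k| * |g k| ≤ |a k| * D := mul_le_mul_of_nonneg_left (hD k) (abs_nonneg _)
        _ ≤ |a k| * D * (|(k : ℝ) - L| ^ ν / R ^ ν) := le_mul_of_one_le_right (by positivity) hratio
        _ = D / R ^ ν * (|a k| * |(k : ℝ) - L| ^ ν) := by ring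
        _ ≤ ε * |a k| + D / R ^ ν * (|a k| * |(k : ℝ) - L| ^ ν) :=
            le_add_of_nonneg_left (by positivity)
  have hsum : Summable fun k : ℤ => ε * |a k| + D / R ^ ν * (|a k| * |(k : ℝ) - L| ^ ν) :=
    (habs.mul_left ε).add (hmom.mul_left _)
  calc |∑' k, a k * g k| ≤ ∑' k, |a k * g k| :=
        abs_tsum_le_tsum_abs (hsum.of_nonneg_of_le (fun _ => abs_nonneg _) hpt)
    _ ≤ ∑' k : ℤ, (ε * |a k| + D / R ^ ν * (|a k| * |(k : ℝ) - L| ^ ν)) :=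
        Summable.tsum_le_tsum hpt (hsum.of_nonneg_of_le (fun _ => abs_nonneg _) hpt) hsum
    _ = ε * ∑' k, |a k| + D / R ^ ν * ∑' k : ℤ, |a k| * |(k : ℝ) - L| ^ ν := by
        rw [(habs.mul_left ε).tsum_add (hmom.mul_left _), tsum_mul_left, tsum_mul_left]
    _ ≤ ε * M + D / R ^ ν * C := by gcongr

namespace IsKernel

variable {χ : ℝ → ℝ}

lemma exists_tsum_abs_le (hχ : IsKernel χ) :
    ∃ M, ∀ u, 0 < u → ∑' k : ℤ, |χ (Real.exp (-(k : ℝ)) * u)| ≤ M := by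
  obtain ⟨hsum, hpart, ν, hν, C, hC⟩ := hχ
  exact ⟨_, fun u hu => tsum_abs_le_of_hasSum_one_of_moment hν (hsum u hu) (hpart u hu)
    (hC u hu).1 (hC u hu).2⟩

lemma summable_expSamp {f : ℝ → ℝ} {B w t : ℝ} (hχ : IsKernel χ) (ht : 0 < t)
    (hf : ∀ x, 0 < x → |f x| ≤ B) :
    Summable fun k : ℤ => χ (Real.exp (-(k : ℝ)) * t ^ w) * f (Real.exp ((k : ℝ) / w)) :=
  ((hχ.1 _ (Real.rpow_pos_of_pos ht w)).mul_right B).of_norm_bounded fun k => by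
    rw [Real.norm_eq_abs, abs_mul]
    exact mul_le_mul_of_nonneg_left (hf _ (Real.exp_pos _)) (abs_nonneg _)

lemma expSamp_const (hχ : IsKernel χ) {t : ℝ} (ht : 0 < t) (c w : ℝ) :
    expSamp χ (fun _ => c) w t = c := by
  rw [expSamp, tsum_mul_right, (hχ.2.1 _ (Real.rpow_pos_of_pos ht w)).tsum_eq, one_mul]

lemma expSamp_sub {f g : ℝ → ℝ} {B B' : ℝ} (hχ : IsKernel χ) {t : ℝ} (ht : 0 < t)
    (hf : ∀ x, 0 < x → |f x| ≤ B) (hg : ∀ x, 0 < x → |g x| ≤ B') (w : ℝ) :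
    expSamp χ f w t - expSamp χ g w t = expSamp χ (f - g) w t := by
  rw [expSamp, expSamp, expSamp, ← (hχ.summable_expSamp ht hf).tsum_sub (hχ.summable_expSamp ht hg)]
  simp only [Pi.sub_apply, mul_sub]

theorem tendsto_expSamp_of_continuousAt {g : ℝ → ℝ} {B t : ℝ} (hχ : IsKernel χ) (ht : 0 < t)
    (hg : ∀ x, 0 < x → |g x| ≤ B) (hgt : ContinuousAt g t) :
    Tendsto (fun w => expSamp χ g w t) atTop (nhds (g t)) := by
  obtain ⟨M, hM⟩ := hχ.exists_tsum_abs_le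
  obtain ⟨ν, hν, C, hC⟩ := hχ.2.2
  have hgD : ∀ x, 0 < x → |g x - g t| ≤ B + |g t| := fun x hx =>
    (abs_sub _ _).trans (by linarith [hg x hx])
  rw [Metric.tendsto_nhds]
  intro ε hε
  obtain ⟨ε', hε', hε'M⟩ := exists_pos_mul_lt (half_pos hε) M
  obtain ⟨η, hη, hnear⟩ := Metric.continuousAt_iff.mp
    (hgt.comp_of_eq Real.continuous_exp.continuousAt (Real.exp_log ht)) ε' hε'
  have htail : Tendsto (fun w => (B + |g t|) / (w * η) ^ ν * C) atTop (nhds 0) := by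
    simpa using ((tendsto_const_nhds.div_atTop
      ((tendsto_rpow_atTop hν).comp (tendsto_id.atTop_mul_const hη))).mul_const C)
  filter_upwards [eventually_gt_atTop 0, htail.eventually (gt_mem_nhds (half_pos hε))]
    with w hw hwtail
  have hu : 0 < t ^ w := Real.rpow_pos_of_pos ht w
  rw [Real.dist_eq, ← hχ.expSamp_const ht (g t) w,
    hχ.expSamp_sub ht hg (fun _ _ => le_rfl) w]
  have hnear' : ∀ k : ℤ, |(k : ℝ) - Real.log (t ^ w)| < w * η →
      |g (Real.exp (k / w)) - g t| ≤ ε' := by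
    intro k hk
    rw [Real.log_rpow ht] at hk
    have hk' : |(k : ℝ) / w - Real.log t| < η := by
      rw [show (k : ℝ) / w - Real.log t = ((k : ℝ) - w * Real.log t) / w by field_simp,
        abs_div, abs_of_pos hw, div_lt_iff₀ hw]
      linarith
    have := hnear (x := (k : ℝ) / w) (by rwa [Real.dist_eq])
    rw [Real.dist_eq, Function.comp_apply, Function.comp_apply, Real.exp_log ht] at this
    exact this.le
  calc |expSamp χ (g - fun _ => g t) w t| ≤ ε' * M + (B + |g t|) / (w * η) ^ ν * C :=
        abs_tsum_mul_le_of_moment hν.le (mul_pos hw hη) hε'.le (hχ.1 _ hu) (hM _ hu)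
          (hC _ hu).1 (hC _ hu).2 (fun k => hgD _ (Real.exp_pos _)) hnear'
    _ < ε := by linarith

end IsKernel

open Classical in
lemma expSamp_single {χ : ℝ → ℝ} {w t : ℝ} (hw : w ≠ 0) (ht : 0 < t) (c : ℝ) :
    expSamp χ (Pi.single t c) w t =
      if ∃ m : ℤ, w * Real.log t = m then χ 1 * c else 0 := by
  have hnode : ∀ k : ℤ, Real.exp (k / w) = t ↔ w * Real.log t = k := by
    intro k
    rw [← Real.exp_log ht, Real.exp_eq_exp, Real.exp_log ht, div_eq_iff hw, mul_comm, eq_comm]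
  simp only [expSamp, Pi.single_apply]
  split_ifs with hm
  · obtain ⟨m, hm⟩ := hm
    have hone : Real.exp (-(m : ℝ)) * t ^ w = 1 := by
      rw [Real.rpow_def_of_pos ht, ← Real.exp_add, mul_comm, hm, neg_add_cancel, Real.exp_zero]
    rw [tsum_eq_single m fun k hk => by simp [hnode, hm, Ne.symm hk]]
    simp [hnode, hm, hone]
  · exact (tsum_congr fun k => by rw [if_neg fun h => hm ⟨k, (hnode k).1 h⟩, mul_zero]).trans
      tsum_zero

/-- Behaviour at a removable discontinuity. -/
theorem stmt8 (χ f : ℝ → ℝ) (hχ : IsKernel χ)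
    (B : ℝ) (hf : ∀ x : ℝ, 0 < x → |f x| ≤ B)
    (t : ℝ) (ht : 0 < t) (ℓ : ℝ)
    (hfp : Filter.Tendsto f (nhdsWithin t (Set.Ioi t)) (nhds ℓ))
    (hfm : Filter.Tendsto f (nhdsWithin t (Set.Iio t)) (nhds ℓ)) :
    Filter.Tendsto (fun w => expSamp χ f w t)
      (Filter.atTop ⊓ Filter.principal {w : ℝ | ∃ m : ℤ, w * Real.log t = (m : ℝ)})
      (nhds (ℓ + χ 1 * (f t - ℓ))) ∧
    Filter.Tendsto (fun w => expSamp χ f w t)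
      (Filter.atTop ⊓ Filter.principal {w : ℝ | ∀ m : ℤ, w * Real.log t ≠ (m : ℝ)})
      (nhds ℓ) ∧
    (χ 1 = 0 → Filter.Tendsto (fun w => expSamp χ f w t) Filter.atTop (nhds ℓ)) := by
  classical
  set f₀ := Function.update f t ℓ
  have hf₀ : ∀ x, 0 < x → |f₀ x| ≤ max B |ℓ| := by
    intro x hx
    by_cases h : x = t
    · simp [f₀, h]
    · simpa [f₀, h] using Or.inl (hf x hx)
  have hf₀t : ContinuousAt f₀ t :=
    continuousAt_update_same.mpr (by rw [← nhdsLT_sup_nhdsGT]; exact hfm.sup hfp)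
  have hlim : Tendsto (fun w => expSamp χ f₀ w t) atTop (nhds ℓ) := by
    simpa [f₀] using hχ.tendsto_expSamp_of_continuousAt ht hf₀ hf₀t
  have hsplit : ∀ w ≠ 0, expSamp χ f w t =
      expSamp χ f₀ w t + if ∃ m : ℤ, w * Real.log t = m then χ 1 * (f t - ℓ) else 0 := by
    intro w hw
    have hdiff : f - f₀ = Pi.single t (f t - ℓ) := by
      funext x
      by_cases h : x = t <;> simp [f₀, h]
    rw [← expSamp_single hw ht, ← hdiff, ← hχ.expSamp_sub ht hf hf₀]
    ring
  have hw₀ : ∀ s : Set ℝ, ∀ᶠ w in atTop ⊓ 𝓟 s, w ≠ 0 ∧ w ∈ s := fun s =>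
    ((eventually_ne_atTop 0).filter_mono inf_le_left).and (mem_inf_of_right (mem_principal_self s))
  refine ⟨?_, ?_, fun hχ1 => ?_⟩
  · refine ((hlim.add_const _).mono_left inf_le_left).congr' ?_
    filter_upwards [hw₀ _] with w ⟨hw, hm⟩
    rw [hsplit w hw, if_pos hm]
  · refine (hlim.mono_left inf_le_left).congr' ?_
    filter_upwards [hw₀ _] with w ⟨hw, hm⟩
    rw [hsplit w hw, if_neg fun ⟨m, h⟩ => hm m h, add_zero]
  · refine hlim.congr' ?_
    filter_upwards [eventually_ne_atTop 0] with w hw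
    rw [hsplit w hw, hχ1, zero_mul, ite_self, add_zero]
end

section
/- Let χ be a kernel with M₀(χ), M₁(χ) < ∞, f: ℝ⁺ → ℝ bounded and log-uniformly continuous, and f̄ with |f(e^{k/w}) - f̄(e^{k/w})| ≤ ξ for all k. Then ‖f - S_w^χ f̄‖_∞ ≤ (M₀(χ) + M₁(χ))·ω(f, 1/w) + ξ·M₀(χ). -/
open Real Filter Set MeasureTheory

/-!
Since the kernel is a partition of unity, `f t - S_w^χ f̄ t = ∑ₖ χ(e^{-k} t^w) (f t - f̄(e^{k/w}))`.
The `k`-th point lies at logarithmic distance `|k - w log t| / w` from `t`, and cutting that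
distance into at most `1 + |k - w log t|` pieces of length `≤ 1/w` gives
`|f t - f̄(e^{k/w})| ≤ (1 + |k - w log t|) ω(f, 1/w) + ξ`. Summing against `|χ|` produces the
moments `M₀(χ)` and `M₁(χ)`.
-/

section Chaining

variable {E : Type*} [SeminormedAddCommGroup E] {g : ℝ → E} {δ ω : ℝ}

theorem norm_sub_le_nat_mul_of_forall_norm_sub_le
    (hg : ∀ x y, |x - y| ≤ δ → ‖g x - g y‖ ≤ ω) {n : ℕ} (hn : 0 < n) {x y : ℝ}
    (hxy : |x - y| ≤ n * δ) : ‖g x - g y‖ ≤ n * ω := by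
  have hn' : (0 : ℝ) < n := Nat.cast_pos.mpr hn
  set z : ℕ → ℝ := fun i => y + i * ((x - y) / n)
  have hz0 : z 0 = y := by simp [z]
  have hzn : z n = x := by simp only [z]; field_simp; ring
  have hstep : ∀ i, |z (i + 1) - z i| ≤ δ := fun i => by
    have : z (i + 1) - z i = (x - y) / n := by simp only [z]; push_cast; ring
    rw [this, abs_div, abs_of_pos hn', div_le_iff₀ hn']
    linarith
  calc ‖g x - g y‖ = ‖∑ i ∈ Finset.range n, (g (z (i + 1)) - g (z i))‖ := by
        rw [Finset.sum_range_sub (fun i => g (z i)), hzn, hz0]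
    _ ≤ ∑ i ∈ Finset.range n, ‖g (z (i + 1)) - g (z i)‖ := norm_sum_le _ _
    _ ≤ ∑ _i ∈ Finset.range n, ω := Finset.sum_le_sum fun i _ => hg _ _ (hstep i)
    _ = n * ω := by simp

theorem norm_sub_le_one_add_mul_of_forall_norm_sub_le
    (hg : ∀ x y, |x - y| ≤ δ → ‖g x - g y‖ ≤ ω) (hδ : 0 ≤ δ) (hω : 0 ≤ ω) {l : ℝ}
    (hl : 0 ≤ l) {x y : ℝ} (hxy : |x - y| ≤ l * δ) : ‖g x - g y‖ ≤ (1 + l) * ω := by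
  have hl_lt : l < (⌊l⌋₊ + 1 : ℕ) := by push_cast; exact Nat.lt_floor_add_one l
  have hfloor : (⌊l⌋₊ : ℝ) ≤ l := Nat.floor_le hl
  calc ‖g x - g y‖ ≤ (⌊l⌋₊ + 1 : ℕ) * ω :=
        norm_sub_le_nat_mul_of_forall_norm_sub_le hg (Nat.succ_pos _)
          (hxy.trans (mul_le_mul_of_nonneg_right hl_lt.le hδ))
    _ ≤ (1 + l) * ω := by push_cast; nlinarith

end Chaining

section LogMod

variable {f : ℝ → ℝ} {B δ : ℝ}

theorem abs_sub_le_logMod (hf : ∀ x, 0 < x → |f x| ≤ B) {p q : ℝ} (hp : 0 < p) (hq : 0 < q)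
    (hpq : |Real.log p - Real.log q| ≤ δ) : |f p - f q| ≤ logMod f δ := by
  refine le_csSup ⟨2 * B, ?_⟩ ⟨p, q, hp, hq, hpq, rfl⟩
  rintro _ ⟨p, q, hp, hq, -, rfl⟩
  linarith [abs_sub (f p) (f q), hf p hp, hf q hq]

theorem logMod_nonneg (hf : ∀ x, 0 < x → |f x| ≤ B) (hδ : 0 ≤ δ) : 0 ≤ logMod f δ := by
  simpa using abs_sub_le_logMod hf one_pos one_pos (by simpa using hδ)

theorem abs_sub_le_one_add_mul_logMod (hf : ∀ x, 0 < x → |f x| ≤ B) (hδ : 0 ≤ δ) {l : ℝ}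
    (hl : 0 ≤ l) {p q : ℝ} (hp : 0 < p) (hq : 0 < q)
    (hpq : |Real.log p - Real.log q| ≤ l * δ) : |f p - f q| ≤ (1 + l) * logMod f δ := by
  have hg : ∀ x y, |x - y| ≤ δ → ‖f (exp x) - f (exp y)‖ ≤ logMod f δ := fun x y hxy =>
    abs_sub_le_logMod hf (exp_pos x) (exp_pos y) (by simpa using hxy)
  simpa [exp_log hp, exp_log hq] using
    norm_sub_le_one_add_mul_of_forall_norm_sub_le hg hδ (logMod_nonneg hf hδ) hl hpq

end LogMod

theorem abs_log_sub_log_exp_div {t w : ℝ} (ht : 0 < t) (hw : 0 < w) (k : ℝ) :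
    |Real.log t - Real.log (exp (k / w))| = |k - Real.log (t ^ w)| * (1 / w) := by
  rw [Real.log_exp, Real.log_rpow ht, abs_sub_comm, ← abs_of_pos (one_div_pos.mpr hw),
    ← abs_mul]
  congr 1
  field_simp

theorem abs_sub_tsum_mul_le {ι : Type*} {c b e : ι → ℝ} {x : ℝ} (hc : HasSum c 1)
    (he : Summable fun i => |c i| * e i) (hb : ∀ i, |x - b i| ≤ e i) :
    |x - ∑' i, c i * b i| ≤ ∑' i, |c i| * e i := by
  have hbound : ∀ i, ‖c i * (x - b i)‖ ≤ |c i| * e i := fun i => by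
    rw [Real.norm_eq_abs, abs_mul]
    exact mul_le_mul_of_nonneg_left (hb i) (abs_nonneg _)
  have hdiff : Summable fun i => c i * (x - b i) := he.of_norm_bounded hbound
  have hcb : Summable fun i => c i * b i :=
    ((hc.summable.mul_right x).sub hdiff).congr fun i => by ring
  have hsplit : x - ∑' i, c i * b i = ∑' i, c i * (x - b i) := by
    have hx : ∑' i, c i * x = x := by rw [(hc.mul_right x).tsum_eq, one_mul]
    rw [← hx, ← (hc.summable.mul_right x).tsum_sub hcb, hx]
    exact tsum_congr fun i => by ring
  rw [hsplit]
  exact tsum_of_norm_bounded he.hasSum hbound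

theorem stmt12_general (χ f fbar : ℝ → ℝ) (hχ : IsKernel χ)
    (hb0 : BddAbove (Set.range fun u : {u : ℝ // 0 < u} =>
      ∑' k : ℤ, |χ (Real.exp (-(k : ℝ)) * u.1)| * |(k : ℝ) - Real.log u.1| ^ (0 : ℝ)))
    (hs1 : ∀ u : ℝ, 0 < u →
      Summable fun k : ℤ => |χ (Real.exp (-(k : ℝ)) * u)| * |(k : ℝ) - Real.log u| ^ (1 : ℝ))
    (hb1 : BddAbove (Set.range fun u : {u : ℝ // 0 < u} =>
      ∑' k : ℤ, |χ (Real.exp (-(k : ℝ)) * u.1)| * |(k : ℝ) - Real.log u.1| ^ (1 : ℝ)))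
    (B : ℝ) (hf : ∀ x : ℝ, 0 < x → |f x| ≤ B)
    (w : ℝ) (hw : 0 < w) (ξ : ℝ)
    (hξ : ∀ k : ℤ, |f (Real.exp ((k : ℝ) / w)) - fbar (Real.exp ((k : ℝ) / w))| ≤ ξ) :
    ∀ t : ℝ, 0 < t →
      |f t - expSamp χ fbar w t| ≤
        (absMoment χ 0 + absMoment χ 1) * logMod f (1 / w) + ξ * absMoment χ 0 := by
  intro t ht
  set u := t ^ w
  have hu : 0 < u := rpow_pos_of_pos ht w
  set ω := logMod f (1 / w)
  have hω : 0 ≤ ω := logMod_nonneg hf (by positivity)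
  have hξ0 : 0 ≤ ξ := (abs_nonneg _).trans (hξ 0)
  set a : ℤ → ℝ := fun k => |χ (exp (-(k : ℝ)) * u)|
  set l : ℤ → ℝ := fun k => |(k : ℝ) - Real.log u|
  have ha : Summable a := hχ.1 u hu
  have hal : Summable fun k => a k * l k := by simpa using hs1 u hu
  have hpt : ∀ k : ℤ, |f t - fbar (exp (k / w))| ≤ (1 + l k) * ω + ξ := fun k => by
    linarith [abs_sub_le (f t) (f (exp (k / w))) (fbar (exp (k / w))), hξ k,
      abs_sub_le_one_add_mul_logMod hf (by positivity) (abs_nonneg _) ht (exp_pos _)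
        (abs_log_sub_log_exp_div ht hw k).le]
  have hM0 : ∑' k, a k ≤ absMoment χ 0 := by simpa [absMoment] using le_ciSup hb0 ⟨u, hu⟩
  have hM1 : ∑' k, a k * l k ≤ absMoment χ 1 := by
    simpa [absMoment] using le_ciSup hb1 ⟨u, hu⟩
  calc |f t - expSamp χ fbar w t| ≤ ∑' k, a k * ((1 + l k) * ω + ξ) :=
        abs_sub_tsum_mul_le (hχ.2.1 u hu)
          (((ha.add hal).mul_right ω).add (ha.mul_right ξ) |>.congr fun k => by ring) hpt
    _ = ∑' k, ((a k + a k * l k) * ω + ξ * a k) := tsum_congr fun k => by ring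
    _ = (∑' k, a k + ∑' k, a k * l k) * ω + ξ * ∑' k, a k := by
        rw [((ha.add hal).mul_right ω).tsum_add (ha.mul_left ξ), tsum_mul_right, tsum_mul_left,
          ha.tsum_add hal]
    _ ≤ (absMoment χ 0 + absMoment χ 1) * ω + ξ * absMoment χ 0 := by gcongr

/-- Total round-off error estimate. -/
theorem stmt12 (χ f fbar : ℝ → ℝ) (hχ : IsKernel χ)
    (hb0 : BddAbove (Set.range fun u : {u : ℝ // 0 < u} =>
      ∑' k : ℤ, |χ (Real.exp (-(k : ℝ)) * u.1)| * |(k : ℝ) - Real.log u.1| ^ (0 : ℝ)))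
    (hs1 : ∀ u : ℝ, 0 < u →
      Summable fun k : ℤ => |χ (Real.exp (-(k : ℝ)) * u)| * |(k : ℝ) - Real.log u| ^ (1 : ℝ))
    (hb1 : BddAbove (Set.range fun u : {u : ℝ // 0 < u} =>
      ∑' k : ℤ, |χ (Real.exp (-(k : ℝ)) * u.1)| * |(k : ℝ) - Real.log u.1| ^ (1 : ℝ)))
    (B : ℝ) (hf : ∀ x : ℝ, 0 < x → |f x| ≤ B) (hfc : LogUniformCont f)
    (w : ℝ) (hw : 0 < w) (ξ : ℝ)
    (hξ : ∀ k : ℤ, |f (Real.exp ((k : ℝ) / w)) - fbar (Real.exp ((k : ℝ) / w))| ≤ ξ) :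
    ∀ t : ℝ, 0 < t →
      |f t - expSamp χ fbar w t| ≤
        (absMoment χ 0 + absMoment χ 1) * logMod f (1 / w) + ξ * absMoment χ 0 :=
  stmt12_general χ f fbar hχ hb0 hs1 hb1 B hf w hw ξ hξ
end
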